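/- Let B, X be basic hoops and let (f, g) be a strong external action of B on X satisfying additionally condition (B2): for all b₁, b₂, b₃ ∈ B and x, y, z ∈ X, g_{b̃}( g_{b₃→(b₁→b₂)}( g_{b₂→b₁}(x → y) → z ) → ( g_{b₃→(b₂→b₁)}( g_{b₁→b₂}(y → x) → z ) → z ) ) = 1, where b̃ = ((((b₂ → b₁) → b₃) → b₃) → ((b₁ → b₂) → b₃)). Then the hoop Y' = {(x, b) ∈ X × B | f_b(x) = x}, with operations (x, b) → (y, b') = (g_{b'→b}(x → y), b → b') and (x, b) · (y, b') = (f_{b·b'}(x · y), b · b'), is a basic hoop, i.e. it satisfies ((u → v) → w) → (((v → u) → w) → w) = (1, 1) for all u, v, w ∈ Y'. -/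

import Mathlib

class Hoop (α : Type*) extends CommMonoid α, HImp α where
  himp_self : ∀ x : α, x ⇨ x = 1
  mul_himp_comm : ∀ x y : α, x * (x ⇨ y) = y * (y ⇨ x)
  mul_himp_assoc : ∀ x y z : α, (x * y) ⇨ z = x ⇨ (y ⇨ z)

/-- A basic hoop: a hoop satisfying `((x → y) → z) → (((y → x) → z) → z) = 1`. -/
class BasicHoop (α : Type*) extends Hoop α where
  basic : ∀ x y z : α, ((x ⇨ y) ⇨ z) ⇨ (((y ⇨ x) ⇨ z) ⇨ z) = 1

/-- The multiplication of the semidirect product of a strong external action. -/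
def Amul {B X : Type*} [Hoop B] [Hoop X] (f : B → X → X) (q r : X × B) : X × B :=
  (f (q.2 * r.2) (q.1 * r.1), q.2 * r.2)

/-- The implication of the semidirect product of a strong external action. -/
def Aimp {B X : Type*} [Hoop B] [Hoop X] (g : B → X → X) (q r : X × B) : X × B :=
  (g (r.2 ⇨ q.2) (q.1 ⇨ r.1), q.2 ⇨ r.2)

/-- Membership in `Y' = {(x,b) ∈ X × B | f_b(x) = x}`. -/
def memY {B X : Type*} [Hoop B] [Hoop X] (f : B → X → X) (q : X × B) : Prop :=
  f q.2 q.1 = q.1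

section

variable {α : Type*} [Hoop α]

namespace Hoop

lemma mul_himp_one_eq_one_himp (x : α) : x * (x ⇨ 1) = 1 ⇨ x := by
  simpa using mul_himp_comm x (1 : α)

lemma one_himp (x : α) : (1 : α) ⇨ x = x := by
  set u := x ⇨ (1 : α)
  have hxu : x * u = 1 ⇨ x := mul_himp_one_eq_one_himp x
  have hu : u * (u ⇨ 1) = u := by
    rw [mul_himp_one_eq_one_himp, ← mul_himp_assoc, one_mul]
  have hx : x ⇨ (1 ⇨ x) = 1 := by
    rw [← mul_himp_assoc, mul_one, himp_self]
  have hux : (1 ⇨ x) ⇨ x = u ⇨ 1 := by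
    rw [← hxu, mul_comm, mul_himp_assoc, himp_self]
  symm
  calc x = (1 ⇨ x) * ((1 ⇨ x) ⇨ x) := by rw [← mul_himp_comm, hx, mul_one]
    _ = x * u * (u ⇨ 1) := by rw [hux, ← hxu]
    _ = x * u := by rw [mul_assoc, hu]
    _ = 1 ⇨ x := hxu

lemma himp_one (x : α) : x ⇨ (1 : α) = 1 := by
  have h := mul_himp_assoc (x ⇨ 1) x (1 : α)
  rwa [mul_comm, mul_himp_one_eq_one_himp, one_himp, himp_self] at h

lemma himp_himp_self (x y : α) : x ⇨ (y ⇨ x) = 1 := by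
  rw [← mul_himp_assoc, mul_comm, mul_himp_assoc, himp_self, himp_one]

end Hoop

end

theorem stmt10_general {B X : Type*} [BasicHoop B] [BasicHoop X] (f g : B → X → X)
    (E2g : ∀ x : X, g 1 x = x)
    (B2 : ∀ (b₁ b₂ b₃ : B) (x y z : X),
      g ((((b₂ ⇨ b₁) ⇨ b₃) ⇨ b₃) ⇨ ((b₁ ⇨ b₂) ⇨ b₃))
          (g (b₃ ⇨ (b₁ ⇨ b₂)) (g (b₂ ⇨ b₁) (x ⇨ y) ⇨ z) ⇨
            (g (b₃ ⇨ (b₂ ⇨ b₁)) (g (b₁ ⇨ b₂) (y ⇨ x) ⇨ z) ⇨ z)) = 1) :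
    ∀ u v w : X × B, memY f u → memY f v → memY f w →
      Aimp g (Aimp g (Aimp g u v) w)
          (Aimp g (Aimp g (Aimp g v u) w) w) = ((1 : X), (1 : B)) := by
  rintro ⟨x, b₁⟩ ⟨y, b₂⟩ ⟨z, b₃⟩ - - -
  simp only [Aimp, Prod.mk.injEq]
  refine ⟨?_, BasicHoop.basic b₁ b₂ b₃⟩
  -- `((v → u) → w) → w` is twisted by `g_{b₃ → ((b₂ → b₁) → b₃)} = g₁ = id`, leaving exactly (B2).
  rw [Hoop.himp_himp_self b₃ (b₂ ⇨ b₁), E2g]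
  exact B2 b₁ b₂ b₃ x y z

/-- For a strong external action `(f,g)` of a basic hoop `B` on a basic hoop `X`
satisfying the additional condition (B2), the semidirect product hoop
`Y' = {(x,b) | f_b(x) = x}` is a basic hoop: it satisfies
`((u → v) → w) → (((v → u) → w) → w) = (1,1)` for all `u, v, w ∈ Y'`. -/
theorem stmt10 {B X : Type*} [BasicHoop B] [BasicHoop X] (f g : B → X → X)
    (E1f : ∀ b : B, f b 1 = 1) (E1g : ∀ b : B, g b 1 = 1)
    (E2f : ∀ x : X, f 1 x = x) (E2g : ∀ x : X, g 1 x = x)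
    (E3 : ∀ (b₁ b₂ : B) (x y : X),
      f (b₁ * b₂) (x * g b₁ (x ⇨ y)) = f (b₁ * b₂) (x * (x ⇨ y)))
    (E4 : ∀ (b₁ b₂ b₃ : B) (x y z : X),
      g (b₃ ⇨ (b₁ * b₂)) (f (b₁ * b₂) (x * y) ⇨ z)
        = g ((b₂ ⇨ b₃) ⇨ b₁) (x ⇨ g (b₃ ⇨ b₂) (y ⇨ z)))
    (B2 : ∀ (b₁ b₂ b₃ : B) (x y z : X),
      g ((((b₂ ⇨ b₁) ⇨ b₃) ⇨ b₃) ⇨ ((b₁ ⇨ b₂) ⇨ b₃))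
          (g (b₃ ⇨ (b₁ ⇨ b₂)) (g (b₂ ⇨ b₁) (x ⇨ y) ⇨ z) ⇨
            (g (b₃ ⇨ (b₂ ⇨ b₁)) (g (b₁ ⇨ b₂) (y ⇨ x) ⇨ z) ⇨ z)) = 1) :
    ∀ u v w : X × B, memY f u → memY f v → memY f w →
      Aimp g (Aimp g (Aimp g u v) w)
          (Aimp g (Aimp g (Aimp g v u) w) w) = ((1 : X), (1 : B)) :=
  stmt10_general f g E2g B2
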